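/- Let θ ≥ 0, β ∈ ℝ and let g(y) = θy² + βy + σ be a convex one-variable quadratic. Let δ > 0, α ∈ ℝ, l ≤ u, and y*(λ) = max(l, min(u, -(α + λβ)/(2(δ + λθ)))). Suppose θ > 0, αθ ≠ βδ, and y*(λ₀) ∉ {l, u, -β/(2θ)} for some λ₀ ≥ 0. Then for every λ ≥ 0 with λ ≠ λ₀ we have y*(λ) ≠ y*(λ₀). -/
import Mathlib


theorem clamped_minimizer_injective_at (δ θ α β l u lam₀ : ℝ)
    (hδ : 0 < δ) (hθ : 0 < θ) (hne : α * θ ≠ β * δ) (hlu : l ≤ u) (hlam₀ : 0 ≤ lam₀)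
    (hint : max l (min u (-(α + lam₀ * β) / (2 * (δ + lam₀ * θ))))
        ∉ ({l, u, -β / (2 * θ)} : Set ℝ)) :
    ∀ lam : ℝ, 0 ≤ lam → lam ≠ lam₀ →
      max l (min u (-(α + lam * β) / (2 * (δ + lam * θ))))
        ≠ max l (min u (-(α + lam₀ * β) / (2 * (δ + lam₀ * θ)))) := by
  intro lam hlam hne' heq
  simp only [Set.mem_insert_iff, Set.mem_singleton_iff, not_or] at hint
  obtain ⟨hl, hu, -⟩ := hint
  set v₀ := -(α + lam₀ * β) / (2 * (δ + lam₀ * θ)) with hv₀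
  set v := -(α + lam * β) / (2 * (δ + lam * θ)) with hv
  have hd₀ : (0:ℝ) < 2 * (δ + lam₀ * θ) := by positivity
  have hd : (0:ℝ) < 2 * (δ + lam * θ) := by positivity
  -- clamp at lam₀ equals v₀, and l < v₀ < u
  have h1 : l < min u v₀ := by
    rcases lt_or_ge l (min u v₀) with h | h
    · exact h
    · exact absurd (max_eq_left h) hl
  have hmax₀ : max l (min u v₀) = min u v₀ := max_eq_right h1.le
  have h2 : v₀ < u := by
    rcases lt_or_ge v₀ u with h | h
    · exact h
    · exact absurd (by rw [hmax₀, min_eq_left h]) hu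
  have hmin₀ : min u v₀ = v₀ := min_eq_right h2.le
  have hc₀ : max l (min u v₀) = v₀ := by rw [hmax₀, hmin₀]
  have hlv₀ : l < v₀ := by rwa [hmin₀] at h1
  -- now heq : clamp at lam = v₀
  rw [hc₀] at heq
  have h3 : min u v > l := by
    rcases lt_or_ge l (min u v) with h | h
    · exact h
    · rw [max_eq_left h] at heq; exact absurd heq.symm (ne_of_gt hlv₀)
  have h4 : min u v = v₀ := by rwa [max_eq_right h3.le] at heq
  have h5 : v = v₀ := by
    rcases lt_or_ge v u with h | h
    · rwa [min_eq_right h.le] at h4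
    · rw [min_eq_left h] at h4; exact absurd h4 (ne_of_gt h2)
  rw [hv, hv₀, div_eq_div_iff hd.ne' hd₀.ne'] at h5
  apply hne
  have hsub : (lam - lam₀) * (α * θ - β * δ) = 0 := by ring_nf; nlinarith [h5]
  rcases mul_eq_zero.mp hsub with h | h
  · exact absurd (sub_eq_zero.mp h) hne'
  · linarith [sub_eq_zero.mp h]
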